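/- In the (2,1)-I/O model pebble game on a directed bipartite gadget g consisting of n source vertices s_1,...,s_n, one target vertex t, and an edge from each s_j to t, the minimum number of unit-cost moves needed to eliminate all n edges and store the result (i.e., the optimal pebbling cost of g) is exactly n + 2. -/

import Mathlib

/-! The Red-Blue Pebble Game with partial computations, in the `(M,1)`-I/O model.
A pebble on a vertex means the corresponding word is in the cache; a blue pebble is a
"dirty" partial result that must be stored (cost 1) before it can leave the cache. -/

inductive Pebble : Type
  | red
  | blue
deriving DecidableEq

/-- A configuration: the remaining (not yet computed) edges of the DAG, and the pebble
(if any) on each vertex. -/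
structure Config (V : Type) where
  edges : Finset (V × V)
  peb : V → Option Pebble

variable {V : Type} [DecidableEq V] [Fintype V]

/-- The number of pebbles currently on the graph. -/
def pebCount (c : Config V) : ℕ :=
  (Finset.univ.filter fun v => (c.peb v).isSome).card

/-- One move of the game with at most `M` pebbles, together with its cost:
(R1) place a red pebble on an empty vertex, cost 1 (LOAD);
(R2) remove a red pebble, cost 0 (REMOVE), or change red to blue, cost 0;
(R3) change a blue pebble to red, cost 1 (STORE);
(R4) if `u` is a leaf and both `u` and `v` are pebbled, delete the edge `(u,v)` for free,
     and the pebble on `v` becomes blue (partial COMPUTE);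
(R5) at most `M` pebbles are on the graph at any time. -/
inductive Step (M : ℕ) : Config V → Config V → ℕ → Prop
  | load (c : Config V) (v : V) (h : c.peb v = none) (hM : pebCount c < M) :
      Step M c ⟨c.edges, Function.update c.peb v (some Pebble.red)⟩ 1
  | remove (c : Config V) (v : V) (h : c.peb v = some Pebble.red) :
      Step M c ⟨c.edges, Function.update c.peb v none⟩ 0
  | toBlue (c : Config V) (v : V) (h : c.peb v = some Pebble.red) :
      Step M c ⟨c.edges, Function.update c.peb v (some Pebble.blue)⟩ 0
  | store (c : Config V) (v : V) (h : c.peb v = some Pebble.blue) :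
      Step M c ⟨c.edges, Function.update c.peb v (some Pebble.red)⟩ 1
  | compute (c : Config V) (u v : V) (he : (u, v) ∈ c.edges)
      (hleaf : ∀ x, (x, u) ∉ c.edges)
      (hu : (c.peb u).isSome) (hv : (c.peb v).isSome) :
      Step M c ⟨c.edges.erase (u, v), Function.update c.peb v (some Pebble.blue)⟩ 0

/-- `Reach M c c' k`: configuration `c'` is reachable from `c` by a pebbling strategy of
total cost `k`. -/
inductive Reach (M : ℕ) : Config V → Config V → ℕ → Prop
  | refl (c : Config V) : Reach M c c 0
  | tail {a b c : Config V} {k1 k2 : ℕ} :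
      Reach M a b k1 → Step M b c k2 → Reach M a c (k1 + k2)

/-- The set of costs of pebbling strategies that, starting from the DAG with edge set `E`
and an empty cache, delete all edges and store all results (no dirty blue pebble
remains). -/
def Achievable (M : ℕ) (E : Finset (V × V)) : Set ℕ :=
  {k | ∃ c' : Config V, Reach M ⟨E, fun _ => none⟩ c' k ∧
    c'.edges = ∅ ∧ ∀ v, c'.peb v ≠ some Pebble.blue}

/-- The star gadget: `n` source vertices `1, ..., n`, one target vertex `0`, and an edge
from each source to the target. -/
def starEdges (n : ℕ) : Finset (Fin (n + 1) × Fin (n + 1)) :=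
  Finset.univ.image fun i : Fin n => ((i.succ : Fin (n + 1)), (0 : Fin (n + 1)))

/-! A potential argument gives the lower bound. Call a source *settled* once its edge is
deleted or while it carries a pebble; the potential counts the settled sources, plus one while
the target is pebbled or once some edge is gone, plus one once all edges are gone and the
target is not dirty. Every move raises the potential by at most its cost: only a load can
settle a new source, and a compute keeps its source settled while deleting its edge. The
potential starts at `0` and ends at `n + 2`. The matching strategy loads the target once, then
loads, computes and removes each source in turn, and finally stores the target. -/

open Finset

section

variable {M : ℕ}

theorem Reach.trans {a b c : Config V} {k₁ k₂ : ℕ} (h₁ : Reach M a b k₁)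
    (h₂ : Reach M b c k₂) : Reach M a c (k₁ + k₂) := by
  induction h₂ with
  | refl => exact h₁
  | tail _ s ih => rw [← Nat.add_assoc]; exact ih.tail s

theorem Step.edges_subset {c c' : Config V} {k : ℕ} (h : Step M c c' k) :
    c'.edges ⊆ c.edges := by
  cases h with
  | compute => exact erase_subset _ _
  | _ => exact Subset.refl _

theorem Reach.edges_subset {c c' : Config V} {k : ℕ} (h : Reach M c c' k) :
    c'.edges ⊆ c.edges := by
  induction h with
  | refl => exact Subset.refl _
  | tail _ s ih => exact s.edges_subset.trans ih

variable (S : Finset V) (t : V)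

def settledSources (c : Config V) : Finset V :=
  S.filter fun s => (s, t) ∉ c.edges ∨ (c.peb s).isSome

def TargetUsed (c : Config V) : Prop :=
  (c.peb t).isSome ∨ c.edges ≠ S ×ˢ {t}

def ResultStored (c : Config V) : Prop :=
  c.edges = ∅ ∧ c.peb t ≠ some Pebble.blue

instance (c : Config V) : Decidable (TargetUsed S t c) :=
  inferInstanceAs (Decidable (_ ∨ _))

instance (c : Config V) : Decidable (ResultStored t c) :=
  inferInstanceAs (Decidable (_ ∧ _))

def starPotential (c : Config V) : ℕ :=
  #(settledSources S t c) + (if TargetUsed S t c then 1 else 0) +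
    (if ResultStored t c then 1 else 0)

variable {S t}

theorem ite_one_zero_le_of_imp {P Q : Prop} [Decidable P] [Decidable Q] (h : P → Q) :
    (if P then 1 else 0 : ℕ) ≤ if Q then 1 else 0 := by
  split_ifs <;> simp_all

theorem ite_one_zero_le_one {P : Prop} [Decidable P] : (if P then 1 else 0 : ℕ) ≤ 1 := by
  split_ifs <;> simp

omit [Fintype V] in
theorem settledSources_subset_of_isSome_imp {E : Finset (V × V)} {p p' : V → Option Pebble}
    (hp : ∀ s ∈ S, (p' s).isSome → (p s).isSome) :
    settledSources S t ⟨E, p'⟩ ⊆ settledSources S t ⟨E, p⟩ := by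
  intro s hs
  simp only [settledSources, mem_filter] at hs ⊢
  exact ⟨hs.1, hs.2.imp_right (hp s hs.1)⟩

omit [Fintype V] in
theorem settledSources_update_subset (E : Finset (V × V)) (p : V → Option Pebble) (v : V)
    (x : Option Pebble) :
    settledSources S t ⟨E, Function.update p v x⟩ ⊆
      insert v (settledSources S t ⟨E, p⟩) := by
  intro s hs
  rcases eq_or_ne s v with rfl | hsv
  · exact mem_insert_self _ _
  · simp_all [settledSources]

omit [Fintype V] in
theorem settledSources_erase_subset {E : Finset (V × V)} {p : V → Option Pebble} {u : V}
    (ht : t ∉ S) (hu : (p u).isSome) (x : Option Pebble) :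
    settledSources S t ⟨E.erase (u, t), Function.update p t x⟩ ⊆
      settledSources S t ⟨E, p⟩ := by
  intro s hs
  simp only [settledSources, mem_filter] at hs ⊢
  have hst : s ≠ t := ne_of_mem_of_not_mem hs.1 ht
  rcases eq_or_ne s u with rfl | hsu
  · exact ⟨hs.1, Or.inr hu⟩
  · simpa [hsu, hst] using hs

omit [DecidableEq V] [Fintype V] in
theorem TargetUsed.of_isSome_imp {E : Finset (V × V)} {p p' : V → Option Pebble}
    (hp : (p' t).isSome → (p t).isSome) (h : TargetUsed S t ⟨E, p'⟩) :
    TargetUsed S t ⟨E, p⟩ :=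
  h.imp_left hp

omit [DecidableEq V] [Fintype V] in
theorem ResultStored.of_ne_blue_imp {E : Finset (V × V)} {p p' : V → Option Pebble}
    (hp : p' t ≠ some Pebble.blue → p t ≠ some Pebble.blue) (h : ResultStored t ⟨E, p'⟩) :
    ResultStored t ⟨E, p⟩ :=
  ⟨h.1, hp h.2⟩

omit [Fintype V] in
theorem starPotential_le_of_isSome_imp {E : Finset (V × V)} {p p' : V → Option Pebble}
    (hp : ∀ w, (p' w).isSome → (p w).isSome)
    (hb : p' t ≠ some Pebble.blue → p t ≠ some Pebble.blue) :
    starPotential S t ⟨E, p'⟩ ≤ starPotential S t ⟨E, p⟩ := by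
  unfold starPotential
  gcongr ?_ + ?_ + ?_
  · exact card_le_card (settledSources_subset_of_isSome_imp fun s _ => hp s)
  · exact ite_one_zero_le_of_imp (TargetUsed.of_isSome_imp (hp t))
  · exact ite_one_zero_le_of_imp (ResultStored.of_ne_blue_imp hb)

omit [Fintype V] in
theorem starPotential_le_add_one_of_isSome_imp {E : Finset (V × V)} {p p' : V → Option Pebble}
    (hp : ∀ w, (p' w).isSome → (p w).isSome) :
    starPotential S t ⟨E, p'⟩ ≤ starPotential S t ⟨E, p⟩ + 1 := by
  unfold starPotential
  rw [add_assoc _ _ 1]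
  gcongr ?_ + ?_ + ?_
  · exact card_le_card (settledSources_subset_of_isSome_imp fun s _ => hp s)
  · exact ite_one_zero_le_of_imp (TargetUsed.of_isSome_imp (hp t))
  · exact le_add_left ite_one_zero_le_one

omit [Fintype V] in
theorem starPotential_update_le_add_one (ht : t ∉ S) {E : Finset (V × V)}
    {p : V → Option Pebble} {v : V} (hv : p v = none) (x : Pebble) :
    starPotential S t ⟨E, Function.update p v (some x)⟩ ≤
      starPotential S t ⟨E, p⟩ + 1 := by
  have hR : ResultStored t ⟨E, Function.update p v (some x)⟩ → ResultStored t ⟨E, p⟩ :=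
    ResultStored.of_ne_blue_imp fun h => by
      rcases eq_or_ne t v with rfl | htv
      · simp [hv]
      · rwa [Function.update_of_ne htv] at h
  have hT1 := ite_one_zero_le_one (P := TargetUsed S t ⟨E, Function.update p v (some x)⟩)
  unfold starPotential
  rcases eq_or_ne v t with rfl | hvt
  · have hS := card_le_card (settledSources_subset_of_isSome_imp (S := S) (t := v) (E := E)
      (p' := Function.update p v (some x)) fun s hs h => by
        rwa [Function.update_of_ne (ne_of_mem_of_not_mem hs ht)] at h)
    have := ite_one_zero_le_of_imp hR
    omega
  · have hS := (card_le_card (settledSources_update_subset (S := S) (t := t) E p v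
      (some x))).trans (card_insert_le _ _)
    have hT := ite_one_zero_le_of_imp (TargetUsed.of_isSome_imp (S := S) (E := E) (p := p)
      (p' := Function.update p v (some x)) fun h => by rwa [Function.update_of_ne hvt.symm] at h)
    have := ite_one_zero_le_of_imp hR
    omega

theorem Step.starPotential_le {c c' : Config V} {k : ℕ} (ht : t ∉ S)
    (hE : c.edges ⊆ S ×ˢ {t}) (h : Step M c c' k) :
    starPotential S t c' ≤ starPotential S t c + k := by
  obtain ⟨E, p⟩ := c
  cases h with
  | load v hv => exact starPotential_update_le_add_one ht hv _
  | remove v hv =>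
    refine starPotential_le_of_isSome_imp (fun w => ?_) fun _ => ?_
    · rcases eq_or_ne w v with rfl | hwv <;> simp_all
    · rcases eq_or_ne t v with rfl | htv <;> simp_all
  | toBlue v hv =>
    refine starPotential_le_of_isSome_imp (fun w => ?_) fun h => ?_
    · rcases eq_or_ne w v with rfl | hwv <;> simp_all
    · rcases eq_or_ne t v with rfl | htv <;> simp_all
  | store v hv =>
    refine starPotential_le_add_one_of_isSome_imp fun w => ?_
    rcases eq_or_ne w v with rfl | hwv <;> simp_all
  | compute u v he _ hu hv =>
    dsimp only at hE he hu hv ⊢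
    obtain ⟨huS, hvt⟩ : u ∈ S ∧ t = v := by simpa using hE he
    subst hvt
    have hT : TargetUsed S t ⟨E, p⟩ := Or.inl hv
    have hR : ¬ResultStored t ⟨E.erase (u, t), Function.update p t (some .blue)⟩ :=
      fun h => h.2 (by simp)
    have hS := card_le_card (settledSources_erase_subset (S := S) (E := E) ht hu (some .blue))
    have hT1 := ite_one_zero_le_one
      (P := TargetUsed S t ⟨E.erase (u, t), Function.update p t (some .blue)⟩)
    unfold starPotential
    rw [if_pos hT, if_neg hR]
    omega

theorem Reach.starPotential_le {c c' : Config V} {k : ℕ} (ht : t ∉ S)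
    (hE : c.edges ⊆ S ×ˢ {t}) (h : Reach M c c' k) :
    starPotential S t c' ≤ starPotential S t c + k := by
  induction h with
  | refl => exact Nat.le_add_right _ _
  | tail hr hs ih => have := hs.starPotential_le ht (hr.edges_subset.trans hE); omega

omit [Fintype V] in
theorem starPotential_initial (hS : S.Nonempty) :
    starPotential S t ⟨S ×ˢ {t}, fun _ => none⟩ = 0 := by
  simp [starPotential, settledSources, TargetUsed, ResultStored, hS.ne_empty]

omit [Fintype V] in
theorem starPotential_of_done (hS : S.Nonempty) {c : Config V} (hE : c.edges = ∅)
    (hblue : c.peb t ≠ some Pebble.blue) : starPotential S t c = #S + 2 := by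
  simp [starPotential, settledSources, TargetUsed, ResultStored, hE, hblue, hS.ne_empty]

theorem card_add_two_le_of_mem_achievable {k : ℕ} (ht : t ∉ S) (hS : S.Nonempty)
    (hk : k ∈ Achievable M (S ×ˢ {t})) : #S + 2 ≤ k := by
  obtain ⟨c, hreach, hE, hblue⟩ := hk
  have := hreach.starPotential_le ht (Subset.refl _)
  rwa [starPotential_of_done hS hE (hblue t), starPotential_initial hS, zero_add] at this

omit [Fintype V] in
theorem product_singleton_erase (a : V) : (S ×ˢ {t}).erase (a, t) = S.erase a ×ˢ {t} := by
  ext ⟨b, c⟩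
  simp only [mem_erase, mem_product, mem_singleton, ne_eq, Prod.mk.injEq]
  tauto

def pebOnly (t : V) (x : Pebble) : V → Option Pebble :=
  Function.update (fun _ => none) t (some x)

theorem pebCount_pebOnly (E : Finset (V × V)) (x : Pebble) :
    pebCount ⟨E, pebOnly t x⟩ = 1 := by
  simp [pebCount, pebOnly, Function.update_apply, filter_eq']

theorem reach_process_source (hM : 2 ≤ M) {T : Finset V} {s : V} (hs : s ∈ T) (ht : t ∉ T)
    (x : Pebble) : Reach M ⟨T ×ˢ {t}, pebOnly t x⟩ ⟨T.erase s ×ˢ {t}, pebOnly t .blue⟩ 1 := by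
  have hst : s ≠ t := ne_of_mem_of_not_mem hs ht
  have load := Step.load (M := M) ⟨T ×ˢ {t}, pebOnly t x⟩ s (by simp [pebOnly, hst])
    (by rw [pebCount_pebOnly]; omega)
  have compute := Step.compute (M := M)
    ⟨T ×ˢ {t}, Function.update (pebOnly t x) s (some .red)⟩ s t
    (mem_product.mpr ⟨hs, mem_singleton_self t⟩)
    (fun _ h => hst (mem_singleton.mp (mem_product.mp h).2)) (by simp)
    (by simp [pebOnly, hst.symm])
  have remove := Step.remove (M := M)
    ⟨(T ×ˢ {t}).erase (s, t),
      Function.update (Function.update (pebOnly t x) s (some .red)) t (some .blue)⟩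
    s (by simp [hst])
  have hpeb : pebOnly t .blue = Function.update (Function.update
      (Function.update (pebOnly t x) s (some .red)) t (some .blue)) s none := by
    funext w
    simp only [pebOnly, Function.update_apply]
    split_ifs <;> simp_all
  rw [hpeb, ← product_singleton_erase]
  exact (((Reach.refl _).tail load).tail compute).tail remove

theorem reach_process_sources (hM : 2 ≤ M) {T : Finset V} (ht : t ∉ T) :
    Reach M ⟨T ×ˢ {t}, pebOnly t .blue⟩ ⟨∅, pebOnly t .blue⟩ #T := by
  induction T using Finset.induction_on with
  | empty => simpa using Reach.refl (M := M) ⟨∅, pebOnly t .blue⟩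
  | insert a T ha ih =>
    have first := reach_process_source hM (mem_insert_self a T) ht .blue
    rw [erase_insert ha] at first
    simpa [card_insert_of_notMem ha, add_comm] using
      first.trans (ih fun h => ht (mem_insert_of_mem h))

theorem card_add_two_mem_achievable (hM : 2 ≤ M) (ht : t ∉ S) (hS : S.Nonempty) :
    #S + 2 ∈ Achievable M (S ×ˢ {t}) := by
  obtain ⟨a, ha⟩ := hS
  have loadTarget : Step M ⟨S ×ˢ {t}, fun _ => none⟩ ⟨S ×ˢ {t}, pebOnly t .red⟩ 1 :=
    Step.load _ t rfl (by simp [pebCount]; omega)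
  have first := reach_process_source hM ha ht .red
  have rest := reach_process_sources hM (T := S.erase a) (fun h => ht (mem_of_mem_erase h))
  have store := Step.store (M := M) ⟨∅, pebOnly t .blue⟩ t (by simp [pebOnly])
  have hcost : 0 + 1 + 1 + #(S.erase a) + 1 = #S + 2 := by
    rw [card_erase_of_mem ha]; have := card_pos.mpr ⟨a, ha⟩; omega
  refine hcost ▸ ⟨_, ((((Reach.refl _).tail loadTarget).trans first).trans rest).tail store,
    rfl, fun v => ?_⟩
  rcases eq_or_ne v t with rfl | hvt <;> simp [pebOnly, *]

end

theorem starEdges_eq (n : ℕ) : starEdges n = ({0}ᶜ : Finset (Fin (n + 1))) ×ˢ {0} := by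
  ext ⟨a, b⟩
  simp only [starEdges, mem_image, mem_univ, true_and, Prod.mk.injEq, mem_product, mem_compl,
    mem_singleton, ← Fin.exists_succ_eq]
  constructor
  · rintro ⟨i, rfl, rfl⟩; exact ⟨⟨i, rfl⟩, rfl⟩
  · rintro ⟨⟨i, rfl⟩, rfl⟩; exact ⟨i, rfl, rfl⟩

/-- in the `(2,1)`-I/O model pebble game on the star gadget with `n ≥ 1`
sources and one target, the minimum cost to eliminate all `n` edges and store the result
is exactly `n + 2`. -/
theorem stmt9 (n : ℕ) (hn : 1 ≤ n) :
    IsLeast (Achievable 2 (starEdges n)) (n + 2) := by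
  have hcard : #({0}ᶜ : Finset (Fin (n + 1))) = n := by simp [card_compl]
  have h0 : (0 : Fin (n + 1)) ∉ ({0}ᶜ : Finset (Fin (n + 1))) := by simp
  have hne : ({0}ᶜ : Finset (Fin (n + 1))).Nonempty := card_pos.mp (by omega)
  rw [starEdges_eq]
  refine ⟨?_, fun k hk => ?_⟩
  · simpa only [hcard] using card_add_two_mem_achievable le_rfl h0 hne
  · simpa only [hcard] using card_add_two_le_of_mem_achievable h0 hne hk
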